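/- arXiv:1809.01371 — 2 statements merged into one kernel-verified Lean document; each statement's English description precedes it below -/
import Mathlib

section
/- Let q : ℝ → ℝ be integrable and vanish outside [0,1], and let t > 0. There exists a nonzero solution f of −f''+qf=−t²f on [0,∞) with f(0)=0 and ∫₀^∞ |f(x)|² dx < ∞ (i.e. −t² is an eigenvalue of the half-line Dirichlet operator T) if and only if φ'(1,−t²) + t·φ(1,−t²) = 0. -/
open MeasureTheory Set Filter

noncomputable section

/-- `y` (with derivative `y'`) solves `-y'' + q y = lam * y` on the set `J ⊆ ℝ`
in the integrated sense: `y` is continuously differentiable on `J` with derivative `y'`,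
and `y' x = y' a + ∫_a^x (q s - lam) * y s ds` for all `a, x ∈ J`. -/
def SolvesOn (q : ℝ → ℝ) (lam : ℝ) (J : Set ℝ) (y y' : ℝ → ℝ) : Prop :=
  ContinuousOn y J ∧ ContinuousOn y' J ∧
    (∀ x ∈ J, HasDerivWithinAt y (y' x) J x) ∧
    ∀ a ∈ J, ∀ x ∈ J, y' x = y' a + ∫ s in a..x, (q s - lam) * y s

/-- `E` is an eigenvalue of the half-line Dirichlet operator `T`:
there is a nonzero square-integrable solution of `-f'' + q f = E f` on `[0,∞)` with `f(0)=0`. -/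
def IsEvT (q : ℝ → ℝ) (E : ℝ) : Prop :=
  ∃ f f' : ℝ → ℝ, SolvesOn q E (Ici 0) f f' ∧ f 0 = 0 ∧
    (∃ x ∈ Ici (0:ℝ), f x ≠ 0) ∧ IntegrableOn (fun x => (f x) ^ 2) (Ioi 0)

/-- `E` is an eigenvalue of the half-line Neumann operator `T̃`:
there is a nonzero square-integrable solution of `-f'' + q f = E f` on `[0,∞)` with `f'(0)=0`. -/
def IsEvTN (q : ℝ → ℝ) (E : ℝ) : Prop :=
  ∃ f f' : ℝ → ℝ, SolvesOn q E (Ici 0) f f' ∧ f' 0 = 0 ∧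
    (∃ x ∈ Ici (0:ℝ), f x ≠ 0) ∧ IntegrableOn (fun x => (f x) ^ 2) (Ioi 0)

/-- `E` is an eigenvalue of the full-line operator `𝒯` with potential `q`:
there is a nonzero square-integrable solution of `-f'' + q f = E f` on `ℝ`. -/
def IsEvLine (q : ℝ → ℝ) (E : ℝ) : Prop :=
  ∃ f f' : ℝ → ℝ, SolvesOn q E univ f f' ∧
    (∃ x : ℝ, f x ≠ 0) ∧ Integrable (fun x => (f x) ^ 2)

/-- `lam` is an eigenvalue of `H₀` (Dirichlet boundary conditions `f(0)=f(1)=0` on `[0,1]`). -/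
def IsEvH0 (q : ℝ → ℝ) (lam : ℝ) : Prop :=
  ∃ f f' : ℝ → ℝ, SolvesOn q lam (Icc 0 1) f f' ∧ f 0 = 0 ∧ f 1 = 0 ∧
    ∃ x ∈ Icc (0:ℝ) 1, f x ≠ 0

/-- `lam` is an eigenvalue of `H₁` (Neumann boundary conditions `f'(0)=f'(1)=0` on `[0,1]`). -/
def IsEvH1 (q : ℝ → ℝ) (lam : ℝ) : Prop :=
  ∃ f f' : ℝ → ℝ, SolvesOn q lam (Icc 0 1) f f' ∧ f' 0 = 0 ∧ f' 1 = 0 ∧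
    ∃ x ∈ Icc (0:ℝ) 1, f x ≠ 0

/-- `lam` is an eigenvalue of `H₀₁` (mixed boundary conditions `f(0)=f'(1)=0` on `[0,1]`). -/
def IsEvH01 (q : ℝ → ℝ) (lam : ℝ) : Prop :=
  ∃ f f' : ℝ → ℝ, SolvesOn q lam (Icc 0 1) f f' ∧ f 0 = 0 ∧ f' 1 = 0 ∧
    ∃ x ∈ Icc (0:ℝ) 1, f x ≠ 0

/-- `lam` is an eigenvalue of `H₁₀` (mixed boundary conditions `f'(0)=f(1)=0` on `[0,1]`). -/
def IsEvH10 (q : ℝ → ℝ) (lam : ℝ) : Prop :=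
  ∃ f f' : ℝ → ℝ, SolvesOn q lam (Icc 0 1) f f' ∧ f' 0 = 0 ∧ f 1 = 0 ∧
    ∃ x ∈ Icc (0:ℝ) 1, f x ≠ 0


section DirichletAux
open Topology intervalIntegral

lemma myFTC {y y' : ℝ → ℝ} {u v : ℝ} (huv : u ≤ v)
    (hcy : ContinuousOn y (Icc u v)) (hcy' : ContinuousOn y' (Icc u v))
    (hd : ∀ x ∈ Ioo u v, HasDerivAt y (y' x) x) :
    y v = y u + ∫ s in u..v, y' s := by
  have h := integral_eq_sub_of_hasDeriv_right_of_le huv hcy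
    (fun x hx => (hd x hx).hasDerivWithinAt)
    ((hcy'.mono (by rw [uIcc_of_le huv])).intervalIntegrable)
  linarith [h]

lemma IntervalIntegrable.mul_continuousOn' {w u : ℝ → ℝ} {c d : ℝ}
    (hw : IntervalIntegrable w volume c d) (hu : ContinuousOn u (uIcc c d)) :
    IntervalIntegrable (fun s => w s * u s) volume c d := by
  rw [intervalIntegrable_iff] at hw ⊢
  obtain ⟨C, hC⟩ := isCompact_uIcc.exists_bound_of_continuousOn hu
  have hum : AEStronglyMeasurable u (volume.restrict (Set.uIoc c d)) :=
    (hu.mono uIoc_subset_uIcc).aestronglyMeasurable measurableSet_uIoc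
  have hb : ∀ᵐ x ∂(volume.restrict (Set.uIoc c d)), ‖u x‖ ≤ C :=
    (ae_restrict_iff' measurableSet_uIoc).2 (ae_of_all _ fun x hx => hC x (uIoc_subset_uIcc hx))
  have := Integrable.bdd_mul (c := C) hw hum hb
  exact this.congr (ae_of_all _ fun x => mul_comm (u x) (w x))

lemma qmul_intervalIntegrable {q : ℝ → ℝ} (hq : Integrable q) (lam : ℝ) {y : ℝ → ℝ} {u v : ℝ}
    (hy : ContinuousOn y (uIcc u v)) :
    IntervalIntegrable (fun s => (q s - lam) * y s) volume u v :=
  (hq.intervalIntegrable.sub intervalIntegrable_const).mul_continuousOn' hy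

lemma small_interval {w u : ℝ → ℝ} {a b : ℝ} (hab : a ≤ b)
    (hwint : IntervalIntegrable w volume a b)
    (hwu : IntervalIntegrable (fun s => w s * u s) volume a b)
    (hw0 : ∀ s, 0 ≤ w s)
    (hu : ContinuousOn u (Icc a b)) (hu0 : ∀ x, 0 ≤ u x)
    (key : ∀ x ∈ Icc a b, u x ≤ ∫ s in a..x, w s * u s)
    (hsmall : (∫ s in a..b, w s) ≤ 1/2) :
    ∀ x ∈ Icc a b, u x = 0 := by
  obtain ⟨ξ, hξ, hmax⟩ := isCompact_Icc.exists_isMaxOn (nonempty_Icc.2 hab) hu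
  set M := u ξ with hMdef
  have hM : ∀ x ∈ Icc a b, u x ≤ M := fun x hx => hmax hx
  have hsub : uIcc a ξ ⊆ uIcc a b := by
    rw [uIcc_of_le hab, uIcc_of_le hξ.1]
    exact Icc_subset_Icc le_rfl hξ.2
  have hsub2 : uIcc ξ b ⊆ uIcc a b := by
    rw [uIcc_of_le hab, uIcc_of_le hξ.2]
    exact Icc_subset_Icc hξ.1 le_rfl
  have h2 : (∫ s in a..ξ, w s) ≤ 1/2 := by
    have hadd := integral_add_adjacent_intervals (μ := volume) (f := w)
      (hwint.mono_set hsub) (hwint.mono_set hsub2)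
    have hpos : 0 ≤ ∫ s in ξ..b, w s :=
      integral_nonneg hξ.2 (fun s _ => hw0 s)
    linarith
  have h1 : M ≤ (1/2) * M := by
    calc M ≤ ∫ s in a..ξ, w s * u s := key ξ hξ
      _ ≤ ∫ s in a..ξ, w s * M := by
          refine integral_mono_on hξ.1 (hwu.mono_set hsub)
            ((hwint.mono_set hsub).mul_const M) (fun s hs => ?_)
          exact mul_le_mul_of_nonneg_left (hM s ⟨hs.1, hs.2.trans hξ.2⟩) (hw0 s)
      _ = (∫ s in a..ξ, w s) * M := integral_mul_const M w
      _ ≤ (1/2) * M := mul_le_mul_of_nonneg_right h2 (hu0 ξ)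
  intro x hx
  exact le_antisymm (by linarith [hM x hx]) (hu0 x)

/-- Uniqueness: a solution with zero initial data at the left endpoint vanishes. -/
lemma uniq {q : ℝ → ℝ} (hq : Integrable q) {lam a b : ℝ} (hab : a ≤ b) {g g' : ℝ → ℝ}
    (hs : SolvesOn q lam (Icc a b) g g') (hga : g a = 0) (hg'a : g' a = 0) :
    ∀ x ∈ Icc a b, g x = 0 ∧ g' x = 0 := by
  set w : ℝ → ℝ := fun s => 1 + |q s - lam| with hwdef
  set u : ℝ → ℝ := fun x => |g x| + |g' x| with hudef
  have hw1 : ∀ s, 1 ≤ w s := fun s => le_add_of_nonneg_right (abs_nonneg _)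
  have hw0 : ∀ s, 0 ≤ w s := fun s => zero_le_one.trans (hw1 s)
  have hu0 : ∀ x, 0 ≤ u x := fun x => add_nonneg (abs_nonneg _) (abs_nonneg _)
  have hucont : ContinuousOn u (Icc a b) := (hs.1.abs).add (hs.2.1.abs)
  have hqII : ∀ c d : ℝ, IntervalIntegrable (fun s => |q s - lam|) volume c d :=
    fun c d => (hq.intervalIntegrable.sub intervalIntegrable_const).abs
  have hwint : ∀ c d : ℝ, IntervalIntegrable w volume c d :=
    fun c d => intervalIntegrable_const.add (hqII c d)
  have hmemIcc : ∀ {c : ℝ}, c ∈ Icc a b → c ∈ uIcc a b := by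
    intro c hc; rwa [uIcc_of_le hab]
  have hwu : ∀ {c d : ℝ}, c ∈ Icc a b → d ∈ Icc a b →
      IntervalIntegrable (fun s => w s * u s) volume c d := by
    intro c d hc hd
    refine (hwint c d).mul_continuousOn' (hucont.mono ?_)
    refine (uIcc_subset_uIcc (hmemIcc hc) (hmemIcc hd)).trans ?_
    rw [uIcc_of_le hab]
  have key : ∀ x ∈ Icc a b, u x ≤ ∫ s in a..x, w s * u s := by
    intro x hx
    have hax : a ≤ x := hx.1
    have hsubIcc : Icc a x ⊆ Icc a b := Icc_subset_Icc le_rfl hx.2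
    have hsubU : uIcc a x ⊆ Icc a b := by rw [uIcc_of_le hax]; exact hsubIcc
    have hgx : g x = ∫ s in a..x, g' s := by
      have h := myFTC hax (hs.1.mono hsubIcc) (hs.2.1.mono hsubIcc)
        (fun s hsx => (hs.2.2.1 s (hsubIcc (Ioo_subset_Icc_self hsx))).hasDerivAt
          (Icc_mem_nhds hsx.1 (lt_of_lt_of_le hsx.2 hx.2)))
      rw [hga, zero_add] at h; exact h
    have hg'x : g' x = ∫ s in a..x, (q s - lam) * g s := by
      have h := hs.2.2.2 a (left_mem_Icc.2 hab) x hx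
      rw [hg'a, zero_add] at h; exact h
    have hgcont : ContinuousOn g (uIcc a x) := hs.1.mono hsubU
    have hg'cont : ContinuousOn g' (uIcc a x) := hs.2.1.mono hsubU
    have hucontx : ContinuousOn u (uIcc a x) := hucont.mono hsubU
    have e1 : |g x| ≤ ∫ s in a..x, u s := by
      rw [hgx]
      refine (abs_integral_le_integral_abs hax).trans ?_
      refine integral_mono_on hax hg'cont.abs.intervalIntegrable
        hucontx.intervalIntegrable (fun s _ => ?_)
      exact le_add_of_nonneg_left (abs_nonneg _)
    have e2 : |g' x| ≤ ∫ s in a..x, |q s - lam| * u s := by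
      rw [hg'x]
      refine (abs_integral_le_integral_abs hax).trans ?_
      refine integral_mono_on hax (qmul_intervalIntegrable hq lam hgcont).abs
        ((hqII a x).mul_continuousOn' hucontx) (fun s _ => ?_)
      rw [abs_mul]
      exact mul_le_mul_of_nonneg_left (le_add_of_nonneg_right (abs_nonneg _)) (abs_nonneg _)
    have e3 : (∫ s in a..x, u s) + (∫ s in a..x, |q s - lam| * u s)
        = ∫ s in a..x, w s * u s := by
      rw [← integral_add hucontx.intervalIntegrable ((hqII a x).mul_continuousOn' hucontx)]
      refine integral_congr (fun s _ => ?_)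
      simp only [hwdef]; ring
    calc u x = |g x| + |g' x| := rfl
      _ ≤ (∫ s in a..x, u s) + (∫ s in a..x, |q s - lam| * u s) := add_le_add e1 e2
      _ = _ := e3
  -- continuous induction
  set T : Set ℝ := {x | x ∈ Icc a b ∧ ∀ y ∈ Icc a x, u y = 0} with hTdef
  have hua : u a = 0 := by simp [hudef, hga, hg'a]
  have hTa : a ∈ T := ⟨left_mem_Icc.2 hab, fun y hy => by
    have : y = a := le_antisymm hy.2 hy.1
    rw [this]; exact hua⟩
  have hTne : T.Nonempty := ⟨a, hTa⟩
  have hTbdd : BddAbove T := ⟨b, fun x hx => hx.1.2⟩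
  set c := sSup T with hcdef
  have hca : a ≤ c := le_csSup hTbdd hTa
  have hc : c ∈ Icc a b := ⟨hca, csSup_le hTne (fun x hx => hx.1.2)⟩
  have hIco : ∀ y ∈ Ico a c, u y = 0 := by
    intro y hy
    obtain ⟨x, hxT, hyx⟩ := exists_lt_of_lt_csSup hTne hy.2
    exact hxT.2 y ⟨hy.1, hyx.le⟩
  have huc : u c = 0 := by
    have h1 : u c ≤ ∫ s in a..c, w s * u s := key c ⟨hca, hc.2⟩
    have h2 : (∫ s in a..c, w s * u s) = 0 := by
      rw [integral_of_le hca]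
      refine integral_eq_zero_of_ae ?_
      have hne : ∀ᵐ s : ℝ, s ≠ c := by
        refine ae_iff.2 ?_
        simp only [not_ne_iff, setOf_eq_eq_singleton]
        exact measure_singleton c
      filter_upwards [ae_restrict_mem measurableSet_Ioc, ae_restrict_of_ae hne] with s hsm hsne
      have : s ∈ Ico a c := ⟨hsm.1.le, lt_of_le_of_ne hsm.2 hsne⟩
      simp [hIco s this]
    linarith [hu0 c]
  have hcT : c ∈ T := by
    refine ⟨⟨hca, hc.2⟩, fun y hy => ?_⟩
    rcases lt_or_eq_of_le hy.2 with h | h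
    · exact hIco y ⟨hy.1, h⟩
    · rw [h]; exact huc
  rcases eq_or_lt_of_le hc.2 with hcb | hcb
  · intro x hx
    have h0 : u x = 0 := hcT.2 x (by rw [hcb]; exact hx)
    have h1 : |g x| = 0 ∧ |g' x| = 0 := by
      constructor <;> [skip; skip] <;>
        · have := abs_nonneg (g x); have := abs_nonneg (g' x)
          simp only [hudef] at h0; linarith
    exact ⟨abs_eq_zero.1 h1.1, abs_eq_zero.1 h1.2⟩
  · exfalso
    set Φ : ℝ → ℝ := fun x => ∫ s in c..x, w s with hΦdef
    have hΦcont : ContinuousOn Φ (Icc c b) := by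
      have := continuousOn_primitive_interval' (hwint c b) (left_mem_uIcc (a := c) (b := b))
      rwa [uIcc_of_le hcb.le] at this
    have hΦc : Φ c = 0 := integral_same
    have hmem : Φ ⁻¹' Iio (1/2) ∈ 𝓝[Icc c b] c := by
      have := hΦcont c (left_mem_Icc.2 hcb.le)
      have h05 : Iio (1/2 : ℝ) ∈ 𝓝 (Φ c) := by rw [hΦc]; exact Iio_mem_nhds (by norm_num)
      exact this h05
    have e1 : 𝓝[Ioc c b] c = 𝓝[>] c := nhdsWithin_Ioc_eq_nhdsGT hcb
    have e2 : Φ ⁻¹' Iio (1/2) ∈ 𝓝[Ioc c b] c := nhdsWithin_mono c Ioc_subset_Icc_self hmem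
    haveI : (𝓝[Ioc c b] c).NeBot := by rw [e1]; infer_instance
    obtain ⟨d, hd1, hd2⟩ := Filter.nonempty_of_mem (Filter.inter_mem e2 self_mem_nhdsWithin)
    have hcd : c ≤ d := hd2.1.le
    have hdb : d ∈ Icc a b := ⟨hca.trans hcd, hd2.2⟩
    have key' : ∀ x ∈ Icc c d, u x ≤ ∫ s in c..x, w s * u s := by
      intro x hx
      have hxab : x ∈ Icc a b := ⟨hca.trans hx.1, hx.2.trans hd2.2⟩
      have h1 := key x hxab
      have hzero : (∫ s in a..c, w s * u s) = 0 := by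
        have : EqOn (fun s => w s * u s) (fun _ => (0:ℝ)) (uIcc a c) := by
          intro s hsm
          rw [uIcc_of_le hca] at hsm
          simp [hcT.2 s hsm]
        rw [integral_congr this]
        simp
      have hadd := integral_add_adjacent_intervals (μ := volume) (f := fun s => w s * u s)
        (hwu (left_mem_Icc.2 hab) ⟨hca, hc.2⟩) (hwu ⟨hca, hc.2⟩ hxab)
      rw [hzero, zero_add] at hadd
      calc u x ≤ ∫ (s : ℝ) in a..x, w s * u s := h1
        _ = _ := hadd.symm
    have hud : ∀ x ∈ Icc c d, u x = 0 := by
      refine small_interval hcd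
        ((hwint c d).mono_set (by rw [uIcc_of_le hcd]))
        (hwu ⟨hca, hc.2⟩ hdb) hw0
        (hucont.mono (Icc_subset_Icc hca hdb.2)) hu0 key' hd1.le
    have hdT : d ∈ T := by
      refine ⟨hdb, fun y hy => ?_⟩
      rcases le_or_gt y c with h | h
      · exact hcT.2 y ⟨hy.1, h⟩
      · exact hud y ⟨h.le, hy.2⟩
    exact absurd (le_csSup hTbdd hdT) (not_le.2 hd2.1)

theorem dirichlet_bwd (q : ℝ → ℝ) (hq : Integrable q)
    (hq0 : ∀ x : ℝ, x ∉ Icc (0:ℝ) 1 → q x = 0) (t : ℝ) (ht : 0 < t)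
    (phi phi' : ℝ → ℝ)
    (hphi : SolvesOn q (-t ^ 2) (Icc 0 1) phi phi')
    (hphi0 : phi 0 = 0) (hphi'0 : phi' 0 = 1)
    (hroot : phi' 1 + t * phi 1 = 0) :
    IsEvT q (-t ^ 2) := by
  set lam : ℝ := -t^2 with hlamdef
  have h01 : (0:ℝ) ∈ Icc (0:ℝ) 1 := by norm_num
  have h11 : (1:ℝ) ∈ Icc (0:ℝ) 1 := by norm_num
  have hb : phi' 1 = -t * phi 1 := by linarith
  set g : ℝ → ℝ := fun x => phi 1 * Real.exp (-t*(x-1)) with hgdef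
  set g' : ℝ → ℝ := fun x => -t * (phi 1 * Real.exp (-t*(x-1))) with hg'def
  set f : ℝ → ℝ := fun x => if x ≤ 1 then phi x else g x with hfdef
  set f' : ℝ → ℝ := fun x => if x ≤ 1 then phi' x else g' x with hf'def
  have hgd : ∀ x : ℝ, HasDerivAt g (g' x) x := by
    intro x
    have d2 : HasDerivAt (fun y : ℝ => -t*(y-1)) (-t) x := by
      simpa using ((hasDerivAt_id x).sub_const 1).const_mul (-t)
    have := d2.exp.const_mul (phi 1)
    refine this.congr_deriv ?_
    simp only [hg'def]; ring
  have hgc : Continuous g := by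
    exact Differentiable.continuous (fun x => (hgd x).differentiableAt)
  have hg'c : Continuous g' := by
    have : Continuous fun x : ℝ => Real.exp (-t*(x-1)) :=
      Real.continuous_exp.comp (by continuity)
    exact (continuous_const.mul (continuous_const.mul this))
  have hfeq1 : ∀ y : ℝ, y ≤ 1 → f y = phi y := fun y hy => if_pos hy
  have hf'eq1 : ∀ y : ℝ, y ≤ 1 → f' y = phi' y := fun y hy => if_pos hy
  have hg1 : g 1 = phi 1 := by simp [hgdef]
  have hg'1 : g' 1 = phi' 1 := by simp [hg'def, hb]
  have hfeqg : ∀ y : ℝ, 1 ≤ y → f y = g y := by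
    intro y hy
    rcases eq_or_lt_of_le hy with h | h
    · rw [← h, hfeq1 1 le_rfl, hg1]
    · simp [hfdef, not_le.2 h]
  have hf'eqg : ∀ y : ℝ, 1 ≤ y → f' y = g' y := by
    intro y hy
    rcases eq_or_lt_of_le hy with h | h
    · rw [← h, hf'eq1 1 le_rfl, hg'1]
    · simp [hf'def, not_le.2 h]
  have hmemIcc : ∀ {x : ℝ}, x ∈ Ici (0:ℝ) → x < 1 → Icc (0:ℝ) 1 ∈ 𝓝[Ici (0:ℝ)] x := by
    intro x hx hlt
    rw [show Icc (0:ℝ) 1 = Ici (0:ℝ) ∩ Iic 1 from (Ici_inter_Iic).symm]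
    exact inter_mem self_mem_nhdsWithin (mem_nhdsWithin_of_mem_nhds (Iic_mem_nhds hlt))
  have hunion : Ici (0:ℝ) ⊆ Icc (0:ℝ) 1 ∪ Ici 1 := by
    intro y hy
    rcases le_or_gt y 1 with h | h
    · exact Or.inl ⟨hy, h⟩
    · exact Or.inr h.le
  have hder : ∀ x ∈ Ici (0:ℝ), HasDerivWithinAt f (f' x) (Ici 0) x := by
    intro x hx
    rcases lt_trichotomy x 1 with hlt | heq | hgt
    · have h1 : HasDerivWithinAt f (phi' x) (Icc 0 1) x :=
        (hphi.2.2.1 x ⟨hx, hlt.le⟩).congr (fun y hy => hfeq1 y hy.2) (hfeq1 x hlt.le)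
      rw [hf'eq1 x hlt.le]
      exact h1.mono_of_mem_nhdsWithin (hmemIcc hx hlt)
    · subst heq
      have h1 : HasDerivWithinAt f (phi' 1) (Icc 0 1) 1 :=
        (hphi.2.2.1 1 h11).congr (fun y hy => hfeq1 y hy.2) (hfeq1 1 le_rfl)
      have h2 : HasDerivWithinAt f (phi' 1) (Ici 1) 1 := by
        have h3 := ((hgd 1).hasDerivWithinAt (s := Ici 1)).congr
          (fun y hy => hfeqg y hy) (hfeqg 1 le_rfl)
        rwa [hg'1] at h3
      rw [hf'eq1 1 le_rfl]
      exact (h1.union h2).mono hunion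
    · have h1 : HasDerivAt f (g' x) x :=
        (hgd x).congr_of_eventuallyEq
          (eventuallyEq_of_mem (Ioi_mem_nhds hgt) (fun y hy => hfeqg y (le_of_lt hy)))
      rw [show f' x = g' x from if_neg (not_le.2 hgt)]
      exact h1.hasDerivWithinAt
  have hfc : ContinuousOn f (Ici 0) := fun x hx => (hder x hx).continuousWithinAt
  have hf'c : ContinuousOn f' (Ici 0) := by
    intro x hx
    rcases lt_trichotomy x 1 with hlt | heq | hgt
    · have h1 : ContinuousWithinAt f' (Icc 0 1) x :=
        (hphi.2.1 x ⟨hx, hlt.le⟩).congr (fun y hy => hf'eq1 y hy.2) (hf'eq1 x hlt.le)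
      exact h1.mono_of_mem_nhdsWithin (hmemIcc hx hlt)
    · subst heq
      have h1 : ContinuousWithinAt f' (Icc 0 1) 1 :=
        (hphi.2.1 1 h11).congr (fun y hy => hf'eq1 y hy.2) (hf'eq1 1 le_rfl)
      have h2 : ContinuousWithinAt f' (Ici 1) 1 :=
        (hg'c.continuousWithinAt).congr (fun y hy => hf'eqg y hy) (hf'eqg 1 le_rfl)
      exact (h1.union h2).mono hunion
    · have h1 : ContinuousAt f' x :=
        (hg'c.continuousAt).congr_of_eventuallyEq
          (eventuallyEq_of_mem (Ioi_mem_nhds hgt) (fun y hy => hf'eqg y (le_of_lt hy)))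
      exact h1.continuousWithinAt
  have hII : ∀ u v : ℝ, 0 ≤ u → 0 ≤ v →
      IntervalIntegrable (fun s => (q s - lam) * f s) volume u v := by
    intro u v hu hv
    exact qmul_intervalIntegrable hq lam (hfc.mono (fun s hs => (le_min hu hv).trans hs.1))
  have hq1 : ∀ s : ℝ, 1 < s → q s = 0 :=
    fun s hs => hq0 s (fun hmem => absurd hmem.2 (not_le.2 hs))
  have P : ∀ x ∈ Ici (0:ℝ), f' x = f' 0 + ∫ s in (0:ℝ)..x, (q s - lam) * f s := by
    intro x hx
    rcases le_or_gt x 1 with hx1 | hx1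
    · have hcongr : (∫ s in (0:ℝ)..x, (q s - lam) * f s)
          = ∫ s in (0:ℝ)..x, (q s - lam) * phi s := by
        refine integral_congr (fun s hsm => ?_)
        rw [uIcc_of_le hx] at hsm
        rw [hfeq1 s (hsm.2.trans hx1)]
      rw [hcongr, hf'eq1 x hx1, hf'eq1 0 (by norm_num)]
      exact hphi.2.2.2 0 h01 x ⟨hx, hx1⟩
    · have h1x : (1:ℝ) ≤ x := hx1.le
      have hi1 := hII 0 1 le_rfl zero_le_one
      have hi2 := hII 1 x zero_le_one (zero_le_one.trans h1x)
      have hadd := integral_add_adjacent_intervals hi1 hi2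
      have e1 : (∫ s in (0:ℝ)..1, (q s - lam) * f s) = phi' 1 - phi' 0 := by
        have hcongr : (∫ s in (0:ℝ)..1, (q s - lam) * f s)
            = ∫ s in (0:ℝ)..1, (q s - lam) * phi s := by
          refine integral_congr (fun s hsm => ?_)
          rw [uIcc_of_le zero_le_one] at hsm
          rw [hfeq1 s hsm.2]
        have := hphi.2.2.2 0 h01 1 h11
        rw [hcongr]; linarith
      have e2 : (∫ s in (1:ℝ)..x, (q s - lam) * f s)
          = -t*(phi 1 * Real.exp (-t*(x-1))) + t * phi 1 := by
        have hc : (∫ s in (1:ℝ)..x, (q s - lam) * f s)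
            = ∫ s in (1:ℝ)..x, t^2 * (phi 1 * Real.exp (-t*(s-1))) := by
          refine integral_congr_ae (ae_of_all _ (fun s hsm => ?_))
          rw [uIoc_of_le h1x] at hsm
          have h1s : 1 < s := hsm.1
          rw [hq1 s h1s, hfeqg s h1s.le]
          simp only [hgdef, hlamdef]
          ring
        have hda : ∀ s ∈ uIcc (1:ℝ) x,
            HasDerivAt (fun y => -t*(phi 1 * Real.exp (-t*(y-1))))
              (t^2*(phi 1 * Real.exp (-t*(s-1)))) s := by
          intro s _
          have d2 : HasDerivAt (fun y : ℝ => -t*(y-1)) (-t) s := by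
            simpa using ((hasDerivAt_id s).sub_const 1).const_mul (-t)
          have := (d2.exp.const_mul (phi 1)).const_mul (-t)
          refine this.congr_deriv ?_
          ring
        have hci : IntervalIntegrable (fun s => t^2*(phi 1 * Real.exp (-t*(s-1)))) volume 1 x :=
          (Continuous.intervalIntegrable (by fun_prop) 1 x)
        rw [hc, integral_eq_sub_of_hasDerivAt hda hci]
        norm_num
      rw [← hadd, e1, e2, hf'eq1 0 (by norm_num),
        show f' x = g' x from if_neg (not_le.2 hx1)]
      simp only [hg'def]
      have hb' : phi' 1 = -t * phi 1 := hb
      linarith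
  have hsolve4 : ∀ a ∈ Ici (0:ℝ), ∀ x ∈ Ici (0:ℝ),
      f' x = f' a + ∫ s in a..x, (q s - lam) * f s := by
    intro a ha x hx
    have hsub := integral_interval_sub_left (hII 0 x le_rfl hx) (hII 0 a le_rfl ha)
    rw [P x hx, P a ha]
    linarith
  -- nontriviality
  have hnz : ∃ x ∈ Ici (0:ℝ), f x ≠ 0 := by
    have hcw : ContinuousWithinAt phi' (Icc 0 1) 0 := hphi.2.1 0 h01
    have hmem2 : phi' ⁻¹' (Ioi (1/2)) ∈ 𝓝[Icc (0:ℝ) 1] 0 := by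
      refine hcw ?_
      rw [hphi'0]
      exact Ioi_mem_nhds (by norm_num)
    rw [Metric.mem_nhdsWithin_iff] at hmem2
    obtain ⟨ε, hε, hsubε⟩ := hmem2
    set δ : ℝ := min (ε/2) 1 with hδdef
    have hδ0 : 0 < δ := lt_min (by positivity) one_pos
    have hδ1 : δ ≤ 1 := min_le_right _ _
    have hδε : ∀ y ∈ Icc (0:ℝ) δ, 1/2 < phi' y := by
      intro y hy
      have : y ∈ Metric.ball (0:ℝ) ε ∩ Icc 0 1 := by
        constructor
        · rw [Metric.mem_ball, Real.dist_eq, sub_zero, abs_of_nonneg hy.1]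
          have : y ≤ ε/2 := hy.2.trans (min_le_left _ _)
          linarith
        · exact ⟨hy.1, hy.2.trans hδ1⟩
      exact hsubε this
    have hIccδ : Icc (0:ℝ) δ ⊆ Icc (0:ℝ) 1 := Icc_subset_Icc le_rfl hδ1
    have hFTC := myFTC hδ0.le (hphi.1.mono hIccδ) (hphi.2.1.mono hIccδ)
      (fun s hs => (hphi.2.2.1 s (hIccδ (Ioo_subset_Icc_self hs))).hasDerivAt
        (Icc_mem_nhds hs.1 (lt_of_lt_of_le hs.2 hδ1)))
    rw [hphi0, zero_add] at hFTC
    have hmono : (∫ s in (0:ℝ)..δ, (1/2 : ℝ)) ≤ ∫ s in (0:ℝ)..δ, phi' s := by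
      refine integral_mono_on hδ0.le intervalIntegrable_const ?_ (fun s hs => (hδε s hs).le)
      exact ((hphi.2.1.mono hIccδ).mono (by rw [uIcc_of_le hδ0.le])).intervalIntegrable
    rw [intervalIntegral.integral_const, smul_eq_mul, sub_zero] at hmono
    refine ⟨δ, hδ0.le, ?_⟩
    rw [hfeq1 δ hδ1]
    intro hzero
    rw [hzero] at hFTC
    nlinarith
  -- square integrability
  have hL2 : IntegrableOn (fun x => f x ^ 2) (Ioi 0) := by
    have h1 : IntegrableOn (fun x => f x ^2) (Ioc 0 1) := by
      have hcont : ContinuousOn (fun x => f x ^2) (Icc 0 1) :=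
        (hfc.mono (fun y hy => hy.1)).pow 2
      exact hcont.integrableOn_Icc.mono_set Ioc_subset_Icc_self
    have h2 : IntegrableOn (fun x => f x ^2) (Ioi 1) := by
      have hbase : IntegrableOn (fun x => Real.exp (-(2*t)*x)) (Ioi 1) :=
        exp_neg_integrableOn_Ioi 1 (by positivity)
      have h3 : IntegrableOn
          (fun x => (phi 1 ^2 * Real.exp (2*t)) * Real.exp (-(2*t)*x)) (Ioi 1) :=
        hbase.const_mul _
      refine h3.congr_fun (fun x hx => ?_) measurableSet_Ioi
      rw [hfeqg x (le_of_lt hx)]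
      simp only [hgdef]
      rw [mul_pow, sq (Real.exp (-t*(x-1))), ← Real.exp_add, mul_assoc, ← Real.exp_add]
      congr 2
      ring
    have hun : IntegrableOn (fun x => f x ^2) (Ioc 0 1 ∪ Ioi 1) := h1.union h2
    refine hun.mono_set (fun x hx => ?_)
    rcases le_or_gt x 1 with h | h
    · exact Or.inl ⟨hx, h⟩
    · exact Or.inr h
  refine ⟨f, f', ⟨hfc, hf'c, hder, hsolve4⟩, ?_, hnz, hL2⟩
  rw [hfeq1 0 zero_le_one, hphi0]

set_option maxHeartbeats 1000000 in
theorem dirichlet_fwd (q : ℝ → ℝ) (hq : Integrable q)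
    (hq0 : ∀ x : ℝ, x ∉ Icc (0:ℝ) 1 → q x = 0) (t : ℝ) (ht : 0 < t)
    (phi phi' : ℝ → ℝ)
    (hphi : SolvesOn q (-t ^ 2) (Icc 0 1) phi phi')
    (hphi0 : phi 0 = 0) (hphi'0 : phi' 0 = 1)
    (hev : IsEvT q (-t ^ 2)) :
    phi' 1 + t * phi 1 = 0 := by
  set lam : ℝ := -t^2 with hlamdef
  have ht0 : t ≠ 0 := ne_of_gt ht
  have h01 : (0:ℝ) ∈ Icc (0:ℝ) 1 := by norm_num
  have h11 : (1:ℝ) ∈ Icc (0:ℝ) 1 := by norm_num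
  obtain ⟨f, f', hsol, hf0, hnz, hL2⟩ := hev
  have hmono : ∀ J : Set ℝ, J ⊆ Ici 0 → SolvesOn q lam J f f' := fun J hJ =>
    ⟨hsol.1.mono hJ, hsol.2.1.mono hJ, fun x hx => (hsol.2.2.1 x (hJ hx)).mono hJ,
     fun a ha x hx => hsol.2.2.2 a (hJ ha) x (hJ hx)⟩
  have hsol01 : SolvesOn q lam (Icc 0 1) f f' := hmono _ (fun x hx => hx.1)
  have hq1 : ∀ s : ℝ, 1 < s → q s = 0 :=
    fun s hs => hq0 s (fun hmem => absurd hmem.2 (not_le.2 hs))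
  have hsubu : ∀ {A B a x : ℝ}, A ≤ B → a ∈ Icc A B → x ∈ Icc A B → uIcc a x ⊆ Icc A B := by
    intro A B a x hAB ha hx
    rw [← uIcc_of_le hAB]
    exact uIcc_subset_uIcc (by rwa [uIcc_of_le hAB]) (by rwa [uIcc_of_le hAB])
  -- generic: difference of two solutions (with scalar) is a solution
  have hdiffSolves : ∀ (A B : ℝ), A ≤ B → ∀ (y1 y1' y2 y2' : ℝ → ℝ) (c : ℝ),
      SolvesOn q lam (Icc A B) y1 y1' → SolvesOn q lam (Icc A B) y2 y2' →
      SolvesOn q lam (Icc A B) (fun x => y1 x - c * y2 x) (fun x => y1' x - c * y2' x) := by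
    intro A B hAB y1 y1' y2 y2' c hs1 hs2
    refine ⟨hs1.1.sub (continuousOn_const.mul hs2.1),
      hs1.2.1.sub (continuousOn_const.mul hs2.2.1),
      fun x hx => (hs1.2.2.1 x hx).sub ((hs2.2.2.1 x hx).const_mul c),
      fun a ha x hx => ?_⟩
    have e1 := hs1.2.2.2 a ha x hx
    have e2 := hs2.2.2.2 a ha x hx
    have II1 := qmul_intervalIntegrable hq lam (hs1.1.mono (hsubu hAB ha hx))
    have II2 := qmul_intervalIntegrable hq lam (hs2.1.mono (hsubu hAB ha hx))
    have e3 : (∫ s in a..x, (q s - lam) * (y1 s - c * y2 s))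
        = (∫ s in a..x, (q s - lam) * y1 s) - c * ∫ s in a..x, (q s - lam) * y2 s := by
      rw [← intervalIntegral.integral_const_mul, ← integral_sub II1 (II2.const_mul c)]
      exact integral_congr (fun s _ => by ring)
    simp only []
    rw [e3, e1, e2]; ring
  -- Step A : f = f'(0) * phi on [0,1]
  set c0 : ℝ := f' 0 with hc0def
  have hsub : SolvesOn q lam (Icc 0 1)
      (fun x => f x - c0 * phi x) (fun x => f' x - c0 * phi' x) :=
    hdiffSolves 0 1 zero_le_one f f' phi phi' c0 hsol01 hphi
  have hvan := uniq hq zero_le_one hsub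
    (by rw [hf0, hphi0]; ring) (by rw [hphi'0]; ring)
  have hf1 : f 1 = c0 * phi 1 := by have := (hvan 1 h11).1; linarith
  have hf'1 : f' 1 = c0 * phi' 1 := by have := (hvan 1 h11).2; linarith
  -- Step B : on [1,∞), f is a combination of exponentials
  set A : ℝ := (f 1 + f' 1 / t) / 2 with hAdef
  set B : ℝ := (f 1 - f' 1 / t) / 2 with hBdef
  set h : ℝ → ℝ := fun x => A * Real.exp (t*(x-1)) + B * Real.exp (-t*(x-1)) with hhdef
  set h' : ℝ → ℝ := fun x => t*A * Real.exp (t*(x-1)) - t*B * Real.exp (-t*(x-1)) with hh'def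
  have d1 : ∀ x : ℝ, HasDerivAt (fun y : ℝ => t*(y-1)) t x := by
    intro x; simpa using ((hasDerivAt_id x).sub_const 1).const_mul t
  have d2 : ∀ x : ℝ, HasDerivAt (fun y : ℝ => -t*(y-1)) (-t) x := by
    intro x; simpa using ((hasDerivAt_id x).sub_const 1).const_mul (-t)
  have hDeriv : ∀ x : ℝ, HasDerivAt h (h' x) x := by
    intro x
    have := ((d1 x).exp.const_mul A).add ((d2 x).exp.const_mul B)
    refine this.congr_deriv ?_
    simp only [hh'def]; ring
  have hDeriv' : ∀ x : ℝ, HasDerivAt h' (t^2 * h x) x := by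
    intro x
    have := ((d1 x).exp.const_mul (t*A)).sub ((d2 x).exp.const_mul (t*B))
    refine this.congr_deriv ?_
    simp only [hhdef]; ring
  have hhcont : Continuous h := Differentiable.continuous (fun x => (hDeriv x).differentiableAt)
  have hh'cont : Continuous h' :=
    Differentiable.continuous (fun x => (hDeriv' x).differentiableAt)
  have hsolh : ∀ X : ℝ, 1 ≤ X → SolvesOn q lam (Icc 1 X) h h' := by
    intro X hX
    refine ⟨hhcont.continuousOn, hh'cont.continuousOn,
      fun x hx => (hDeriv x).hasDerivWithinAt, fun a ha x hx => ?_⟩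
    have hcongr : (∫ s in a..x, (q s - lam) * h s) = ∫ s in a..x, t^2 * h s := by
      refine integral_congr_ae (ae_of_all _ (fun s hsm => ?_))
      have h1s : 1 < s := lt_of_le_of_lt (le_min ha.1 hx.1) hsm.1
      rw [hq1 s h1s]
      simp only [hlamdef]; ring
    have hci : IntervalIntegrable (fun s => t^2 * h s) volume a x :=
      (continuous_const.mul hhcont).intervalIntegrable a x
    rw [hcongr, integral_eq_sub_of_hasDerivAt (fun s _ => hDeriv' s) hci]
    ring
  have hh1 : h 1 = f 1 := by
    simp only [hhdef, sub_self, mul_zero, Real.exp_zero, mul_one, neg_mul, neg_zero]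
    rw [hAdef, hBdef]; field_simp; ring
  have hh'1 : h' 1 = f' 1 := by
    simp only [hh'def, sub_self, mul_zero, Real.exp_zero, mul_one, neg_mul, neg_zero]
    rw [hAdef, hBdef]; field_simp; ring
  have hfh : ∀ x : ℝ, 1 ≤ x → f x = h x := by
    intro x hx
    have hdiff : SolvesOn q lam (Icc 1 x)
        (fun y => f y - 1 * h y) (fun y => f' y - 1 * h' y) :=
      hdiffSolves 1 x hx f f' h h' 1
        (hmono _ (fun y hy => zero_le_one.trans hy.1)) (hsolh x hx)
    have := (uniq hq hx hdiff (by rw [hh1]; ring) (by rw [hh'1]; ring)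
      x (right_mem_Icc.2 hx)).1
    linarith
  -- Step C : A = 0 by square-integrability
  have hA0 : A = 0 := by
    by_contra hA0
    have hAabs : 0 < |A| := abs_pos.2 hA0
    set M : ℝ := 1 + Real.log (2*|B|/|A| + 1) / (2*t) with hMdef
    have hlognn : 0 ≤ Real.log (2*|B|/|A| + 1) :=
      Real.log_nonneg (le_add_of_nonneg_left (by positivity))
    have hM1 : 1 ≤ M := by
      have h0 : 0 ≤ Real.log (2*|B|/|A| + 1) / (2*t) := div_nonneg hlognn (by positivity)
      rw [hMdef]; linarith
    have hlow : ∀ x : ℝ, x ∈ Ioi M → (|A|/2)^2 ≤ f x ^ 2 := by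
      intro x hx
      have hx' : M < x := hx
      have hx1 : 1 ≤ x := hM1.trans hx'.le
      rw [hfh x hx1]
      set E : ℝ := Real.exp (t*(x-1)) with hEdef
      have hE1 : 1 ≤ E := Real.one_le_exp (by nlinarith)
      have hE0 : 0 < E := lt_of_lt_of_le one_pos hE1
      have hEneg : Real.exp (-t*(x-1)) = E⁻¹ := by
        rw [hEdef, ← Real.exp_neg]; congr 1; ring
      have hEE : 2*|B|/|A| ≤ E * E := by
        have hl1 : Real.log (2*|B|/|A| + 1) ≤ 2*t*(x-1) := by
          have hstep : Real.log (2*|B|/|A|+1) / (2*t) ≤ x - 1 := by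
            have := hx'
            rw [hMdef] at this
            linarith
          calc Real.log (2*|B|/|A|+1) = (Real.log (2*|B|/|A|+1) / (2*t)) * (2*t) := by
                field_simp
            _ ≤ (x-1) * (2*t) := mul_le_mul_of_nonneg_right hstep (by positivity)
            _ = 2*t*(x-1) := by ring
        have hl2 : 2*|B|/|A| + 1 ≤ Real.exp (2*t*(x-1)) := by
          calc 2*|B|/|A|+1 = Real.exp (Real.log (2*|B|/|A|+1)) :=
                (Real.exp_log (by positivity)).symm
            _ ≤ _ := Real.exp_le_exp.2 hl1
        have hsq : Real.exp (2*t*(x-1)) = E * E := by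
          rw [hEdef, ← Real.exp_add]; congr 1; ring
        linarith
      have hBbd : |B| * E⁻¹ ≤ |A| * E / 2 := by
        rw [div_le_iff₀ hAabs] at hEE
        rw [inv_eq_one_div, mul_one_div, div_le_div_iff₀ hE0 (by norm_num : (0:ℝ) < 2)]
        nlinarith
      have habs : |A|/2 ≤ |h x| := by
        have htri : |A * E| - |B * Real.exp (-t*(x-1))| ≤ |h x| := by
          have h4 := abs_sub_abs_le_abs_sub (A * E) (-(B * Real.exp (-t*(x-1))))
          rw [abs_neg, sub_neg_eq_add] at h4
          calc |A * E| - |B * Real.exp (-t*(x-1))|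
              ≤ |A * E + B * Real.exp (-t*(x-1))| := h4
            _ = |h x| := by rw [hhdef]
        have e1 : |A * E| = |A| * E := by rw [abs_mul, abs_of_pos hE0]
        have e2 : |B * Real.exp (-t*(x-1))| = |B| * E⁻¹ := by
          rw [abs_mul, hEneg, abs_of_pos (inv_pos.2 hE0)]
        rw [e1, e2] at htri
        nlinarith [abs_nonneg A, hE1]
      calc (|A|/2)^2 ≤ |h x|^2 := by
            apply pow_le_pow_left₀ (by positivity) habs
        _ = h x ^ 2 := sq_abs _
    have hM0 : (0:ℝ) < M := lt_of_lt_of_le one_pos hM1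
    have hint : IntegrableOn (fun x => f x ^2) (Ioi M) := hL2.mono_set (Ioi_subset_Ioi hM0.le)
    have hconst : IntegrableOn (fun _ : ℝ => (|A|/2)^2) (Ioi M) := by
      refine Integrable.mono' hint aestronglyMeasurable_const ?_
      refine (ae_restrict_iff' measurableSet_Ioi).2 (ae_of_all _ (fun x hx => ?_))
      rw [Real.norm_eq_abs, abs_of_nonneg (by positivity)]
      exact hlow x hx
    rcases integrable_const_iff.1 hconst with hz | hfin
    · have : |A| / 2 = 0 := by
        have := sq_eq_zero_iff.1 hz
        exact this
      have : |A| = 0 := by linarith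
      exact hA0 (abs_eq_zero.1 this)
    · have hfin' := measure_lt_top (volume.restrict (Ioi M)) univ
      rw [Measure.restrict_apply_univ, Real.volume_Ioi] at hfin'
      exact (lt_irrefl _ hfin')
  have hf'1t : f' 1 = -t * f 1 := by
    rw [hAdef] at hA0
    field_simp at hA0
    linarith
  -- Step D : c0 ≠ 0
  have hc0ne : c0 ≠ 0 := by
    intro hc00
    have hvf := uniq hq zero_le_one hsol01 hf0 hc00
    obtain ⟨x0, hx0, hne⟩ := hnz
    rcases le_or_gt x0 1 with hx01 | hx01
    · exact hne (hvf x0 ⟨hx0, hx01⟩).1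
    · have hsolf1 : SolvesOn q lam (Icc 1 x0) f f' :=
        hmono _ (fun y hy => zero_le_one.trans hy.1)
      exact hne (uniq hq hx01.le hsolf1 (hvf 1 h11).1 (hvf 1 h11).2
        x0 (right_mem_Icc.2 hx01.le)).1
  -- conclusion
  have hfinal : c0 * (phi' 1 + t * phi 1) = 0 := by
    have hz : f' 1 + t * f 1 = 0 := by rw [hf'1t]; ring
    rw [hf1, hf'1] at hz
    linear_combination hz
  have := (mul_eq_zero.1 hfinal).resolve_left hc0ne
  linarith

end DirichletAux

/-- `-t²` is an eigenvalue of the half-line Dirichlet operator `T` iff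
`φ'(1,-t²) + t φ(1,-t²) = 0`. -/
theorem dirichlet_eigenvalue_iff (q : ℝ → ℝ) (hq : Integrable q)
    (hq0 : ∀ x : ℝ, x ∉ Icc (0:ℝ) 1 → q x = 0) (t : ℝ) (ht : 0 < t)
    (phi phi' : ℝ → ℝ)
    (hphi : SolvesOn q (-t ^ 2) (Icc 0 1) phi phi')
    (hphi0 : phi 0 = 0) (hphi'0 : phi' 0 = 1) :
    IsEvT q (-t ^ 2) ↔ phi' 1 + t * phi 1 = 0 := by
  constructor
  · exact dirichlet_fwd q hq hq0 t ht phi phi' hphi hphi0 hphi'0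
  · exact dirichlet_bwd q hq hq0 t ht phi phi' hphi hphi0 hphi'0
end
end

section
/- Let q : ℝ → ℝ be integrable and vanish outside [0,1], and let t > 0. There exists a nonzero solution f of −f''+qf=−t²f on [0,∞) with f'(0)=0 and ∫₀^∞ |f(x)|² dx < ∞ (i.e. −t² is an eigenvalue of the half-line Neumann operator T̃) if and only if θ'(1,−t²) + t·θ(1,−t²) = 0. -/
open MeasureTheory Set Filter

noncomputable section

section AuxiliaryLemmas
open intervalIntegral

/-- FTC helper: y x = y a + ∫ y' under SolvesOn-style derivative hypotheses. -/
lemma my_ftc {y y' : ℝ → ℝ} {a b : ℝ}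
    (hy : ContinuousOn y (Icc a b)) (hy'c : ContinuousOn y' (Icc a b))
    (hdy : ∀ x ∈ Icc a b, HasDerivWithinAt y (y' x) (Icc a b) x)
    {x : ℝ} (hx : x ∈ Icc a b) :
    y x = y a + ∫ s in a..x, y' s := by
  have hax : a ≤ x := hx.1
  have hsub : Icc a x ⊆ Icc a b := Icc_subset_Icc le_rfl hx.2
  have huicc : uIcc a x = Icc a x := uIcc_of_le hax
  have : (∫ s in a..x, y' s) = y x - y a := by
    apply integral_eq_sub_of_hasDeriv_right_of_le hax (hy.mono hsub)
    · intro s hs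
      have hsmem : s ∈ Icc a b := ⟨le_of_lt hs.1, le_of_lt (lt_of_lt_of_le hs.2 hx.2)⟩
      have : HasDerivAt y (y' s) s :=
        (hdy s hsmem).hasDerivAt (Icc_mem_nhds hs.1 (lt_of_lt_of_le hs.2 hx.2))
      exact this.hasDerivWithinAt
    · exact ((hy'c.mono hsub).mono (by rw [huicc])).intervalIntegrable
  linarith [this]

/-- Core uniqueness on a short interval. -/
lemma ode_unique_core (G y y' : ℝ → ℝ) {a b : ℝ} (hab : a ≤ b)
    (hG : IntervalIntegrable G volume a b)
    (hy : ContinuousOn y (Icc a b)) (hy'c : ContinuousOn y' (Icc a b))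
    (hdy : ∀ x ∈ Icc a b, HasDerivWithinAt y (y' x) (Icc a b) x)
    (hint : ∀ x ∈ Icc a b, y' x = y' a + ∫ s in a..x, G s * y s)
    (hya : y a = 0) (hy'a : y' a = 0)
    (hsmall : (∫ s in a..b, (1 + |G s|)) ≤ 1/2) :
    ∀ x ∈ Icc a b, y x = 0 ∧ y' x = 0 := by
  have hu : ContinuousOn (fun s => |y s| + |y' s|) (Icc a b) := hy.abs.add hy'c.abs
  obtain ⟨x₀, hx₀, hmax⟩ := isCompact_Icc.exists_isMaxOn (nonempty_Icc.2 hab) hu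
  have hM0 : (0:ℝ) ≤ |y x₀| + |y' x₀| := add_nonneg (abs_nonneg _) (abs_nonneg _)
  have huM : ∀ s ∈ Icc a b, |y s| + |y' s| ≤ |y x₀| + |y' x₀| := fun s hs => hmax hs
  have huicc : uIcc a b = Icc a b := uIcc_of_le hab
  have hy'I : IntervalIntegrable y' volume a b := (hy'c.mono huicc.subset).intervalIntegrable
  have hGy : IntervalIntegrable (fun s => G s * y s) volume a b :=
    hG.mul_continuousOn (hy.mono huicc.subset)
  have hw : IntervalIntegrable (fun s => (1 + |G s|)) volume a b :=
    (_root_.intervalIntegrable_const (c:=(1:ℝ)) (μ:=volume) (a:=a) (b:=b)).add hG.abs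
  have hwu : IntervalIntegrable (fun s => (1 + |G s|) * (|y s| + |y' s|)) volume a b :=
    hw.mul_continuousOn (hu.mono huicc.subset)
  have hwM : IntervalIntegrable (fun s => (1 + |G s|) * (|y x₀| + |y' x₀|)) volume a b :=
    hw.mul_const _
  have key : ∀ x ∈ Icc a b, |y x| + |y' x| ≤ (|y x₀| + |y' x₀|) * (1/2) := by
    intro x hx
    have hax : a ≤ x := hx.1
    have hmono : uIcc a x ⊆ uIcc a b := by
      rw [huicc, uIcc_of_le hax]; exact Icc_subset_Icc le_rfl hx.2
    have hIccsub : Icc a x ⊆ Icc a b := Icc_subset_Icc le_rfl hx.2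
    have hyx : y x = ∫ s in a..x, y' s := by
      have := my_ftc hy hy'c hdy hx; rw [this, hya]; ring
    have hy'x : y' x = ∫ s in a..x, G s * y s := by rw [hint x hx, hy'a]; ring
    have h1 : |y x| ≤ ∫ s in a..x, |y' s| := by
      rw [hyx]; exact abs_integral_le_integral_abs hax
    have h2 : |y' x| ≤ ∫ s in a..x, |G s * y s| := by
      rw [hy'x]; exact abs_integral_le_integral_abs hax
    have h3 : (∫ s in a..x, |y' s|) + (∫ s in a..x, |G s * y s|)
        ≤ ∫ s in a..x, (1 + |G s|) * (|y s| + |y' s|) := by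
      rw [← integral_add (hy'I.abs.mono_set hmono) (hGy.abs.mono_set hmono)]
      apply integral_mono_on hax ((hy'I.abs.mono_set hmono).add (hGy.abs.mono_set hmono))
        (hwu.mono_set hmono)
      intro s hs
      have h9 : |G s * y s| = |G s| * |y s| := abs_mul _ _
      nlinarith [abs_nonneg (y s), abs_nonneg (y' s), abs_nonneg (G s)]
    have h5 : (∫ s in a..x, (1 + |G s|) * (|y s| + |y' s|))
        ≤ ∫ s in a..x, (1 + |G s|) * (|y x₀| + |y' x₀|) := by
      apply integral_mono_on hax (hwu.mono_set hmono) (hwM.mono_set hmono)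
      intro s hs
      exact mul_le_mul_of_nonneg_left (huM s (hIccsub hs)) (by positivity)
    have h6 : (∫ s in a..x, (1 + |G s|) * (|y x₀| + |y' x₀|))
        = (∫ s in a..x, (1 + |G s|)) * (|y x₀| + |y' x₀|) := integral_mul_const _ _
    have h7 : (∫ s in a..x, (1 + |G s|)) ≤ ∫ s in a..b, (1 + |G s|) := by
      apply integral_mono_interval le_rfl hax hx.2 ?_ hw
      filter_upwards with s; positivity
    have h8 : (∫ s in a..x, (1 + |G s|)) * (|y x₀| + |y' x₀|)
        ≤ (1/2) * (|y x₀| + |y' x₀|) :=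
      mul_le_mul_of_nonneg_right (le_trans h7 hsmall) hM0
    linarith [h5, h6.le, h6.ge]
  have hMz := key x₀ hx₀
  intro x hx
  have h := key x hx
  have h6 := abs_nonneg (y x); have h7 := abs_nonneg (y' x)
  constructor <;> rw [← abs_eq_zero] <;> linarith

/-- Global forward uniqueness. -/
lemma ode_unique (G y y' : ℝ → ℝ) {a b : ℝ} (hab : a ≤ b)
    (hG : IntervalIntegrable G volume a b)
    (hy : ContinuousOn y (Icc a b)) (hy'c : ContinuousOn y' (Icc a b))
    (hdy : ∀ x ∈ Icc a b, HasDerivWithinAt y (y' x) (Icc a b) x)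
    (hint : ∀ c ∈ Icc a b, ∀ x ∈ Icc a b, y' x = y' c + ∫ s in c..x, G s * y s)
    (hya : y a = 0) (hy'a : y' a = 0) :
    ∀ x ∈ Icc a b, y x = 0 ∧ y' x = 0 := by
  have hw : IntervalIntegrable (fun s => (1 + |G s|)) volume a b :=
    (_root_.intervalIntegrable_const (c:=(1:ℝ)) (μ:=volume) (a:=a) (b:=b)).add hG.abs
  have claim : ∀ n : ℕ, ∀ c, c ∈ Icc a b → y c = 0 → y' c = 0 →
      (∫ s in c..b, (1 + |G s|)) ≤ (n:ℝ)/2 → ∀ x ∈ Icc c b, y x = 0 ∧ y' x = 0 := by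
    intro n
    induction n with
    | zero =>
      intro c hc hyc hy'c0 hφ x hx
      have hcb : c ≤ b := hc.2
      have hwc : IntervalIntegrable (fun s => (1 + |G s|)) volume c b :=
        hw.mono_set (by rw [uIcc_of_le hab, uIcc_of_le hcb]; exact Icc_subset_Icc hc.1 le_rfl)
      have hlow : b - c ≤ ∫ s in c..b, (1 + |G s|) := by
        have h1 : (∫ s in c..b, (1:ℝ)) ≤ ∫ s in c..b, (1 + |G s|) :=
          integral_mono_on hcb (_root_.intervalIntegrable_const) hwc
            (fun s _ => le_add_of_nonneg_right (abs_nonneg _))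
        simpa using h1
      have : x = c := le_antisymm (by push_cast at hφ; linarith [hx.2]) hx.1
      rw [this]; exact ⟨hyc, hy'c0⟩
    | succ n ih =>
      intro c hc hyc hy'c0 hφ
      have hcb : c ≤ b := hc.2
      have hsub : Icc c b ⊆ Icc a b := Icc_subset_Icc hc.1 le_rfl
      have huab : uIcc a b = Icc a b := uIcc_of_le hab
      have husub : ∀ {d e : ℝ}, c ≤ d → d ≤ e → e ≤ b → uIcc d e ⊆ uIcc a b := by
        intro d e h1 h2 h3
        rw [huab, uIcc_of_le h2]
        exact Icc_subset_Icc (le_trans hc.1 h1) h3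
      -- restriction helper: apply core on [c, d]
      have core : ∀ d, c ≤ d → d ≤ b → (∫ s in c..d, (1 + |G s|)) ≤ 1/2 →
          ∀ x ∈ Icc c d, y x = 0 ∧ y' x = 0 := by
        intro d hcd hdb hsm
        have hsub2 : Icc c d ⊆ Icc a b := Icc_subset_Icc hc.1 hdb
        refine ode_unique_core G y y' hcd (hG.mono_set (husub le_rfl hcd hdb))
          (hy.mono hsub2) (hy'c.mono hsub2)
          (fun x hx => (hdy x (hsub2 hx)).mono hsub2)
          (fun x hx => hint c hc x (hsub2 hx)) hyc hy'c0 hsm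
      by_cases hsmall : (∫ s in c..b, (1 + |G s|)) ≤ 1/2
      · exact core b hcb le_rfl hsmall
      · -- IVT to find midpoint m
        have hwc : IntegrableOn (fun s => (1 + |G s|)) (Icc c b) volume := by
          rw [integrableOn_Icc_iff_integrableOn_Ioc]
          exact (hw.mono_set (husub le_rfl hcb le_rfl)).1
        have hΦcont : ContinuousOn (fun r => ∫ s in c..r, (1 + |G s|)) (Icc c b) := by
          have := continuousOn_primitive_interval (a:=c) (b:=b)
            (f := fun s => (1 + |G s|)) (μ := volume) (by rwa [uIcc_of_le hcb])
          rwa [uIcc_of_le hcb] at this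
        have hmem : (1/2 : ℝ) ∈ Icc ((fun r => ∫ s in c..r, (1 + |G s|)) c)
            ((fun r => ∫ s in c..r, (1 + |G s|)) b) := by
          simp only [intervalIntegral.integral_same]
          exact ⟨by norm_num, le_of_lt (by simpa using not_le.1 hsmall)⟩
        obtain ⟨m, hm, hΦm⟩ := intermediate_value_Icc hcb hΦcont hmem
        have hym := core m hm.1 hm.2 (le_of_eq hΦm)
        have hsplit : (∫ s in c..m, (1 + |G s|)) + (∫ s in m..b, (1 + |G s|))
            = ∫ s in c..b, (1 + |G s|) :=
          integral_add_adjacent_intervals (hw.mono_set (husub le_rfl hm.1 hm.2))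
            (hw.mono_set (husub hm.1 hm.2 le_rfl))
        have hrest : (∫ s in m..b, (1 + |G s|)) ≤ (n:ℝ)/2 := by
          have := hΦm
          push_cast at hφ ⊢
          simp only at this
          linarith
        have hmz := hym m ⟨hm.1, le_rfl⟩
        have ihm := ih m ⟨le_trans hc.1 hm.1, hm.2⟩ hmz.1 hmz.2 hrest
        intro x hx
        by_cases hxm : x ≤ m
        · exact hym x ⟨hx.1, hxm⟩
        · exact ihm x ⟨le_of_not_ge hxm, hx.2⟩
  obtain ⟨n, hn⟩ := exists_nat_ge ((∫ s in a..b, (1 + |G s|)) * 2)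
  refine claim n a ⟨le_rfl, hab⟩ hya hy'a (by linarith)

lemma hexp_deriv (t : ℝ) (c : ℝ) (x : ℝ) :
    HasDerivAt (fun x => Real.exp (-t*(x-c))) (-t * Real.exp (-t*(x-c))) x := by
  have h1 : HasDerivAt (fun x : ℝ => -t*(x-c)) (-t) x := by
    simpa using ((hasDerivAt_id x).sub_const c).const_mul (-t)
  simpa [mul_comm] using h1.exp

lemma bwd (q : ℝ → ℝ) (hq : Integrable q)
    (hq0 : ∀ x : ℝ, x ∉ Icc (0:ℝ) 1 → q x = 0) (t : ℝ) (ht : 0 < t)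
    (theta theta' : ℝ → ℝ)
    (htheta : SolvesOn q (-t ^ 2) (Icc 0 1) theta theta')
    (htheta0 : theta 0 = 1) (htheta'0 : theta' 0 = 0)
    (hbc : theta' 1 + t * theta 1 = 0) : IsEvTN q (-t ^ 2) := by
  obtain ⟨hθc, hθ'c, hθd, hθint⟩ := htheta
  have hbc' : theta' 1 = -(t * theta 1) := by linarith
  set f : ℝ → ℝ := fun x => if x ≤ 1 then theta x else theta 1 * Real.exp (-t*(x-1)) with hf_def
  set f' : ℝ → ℝ := fun x => if x ≤ 1 then theta' x
    else -(t * theta 1) * Real.exp (-t*(x-1)) with hf'_def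
  have hg : ∀ x, HasDerivAt (fun s => theta 1 * Real.exp (-t*(s-1)))
      (-(t * theta 1) * Real.exp (-t*(x-1))) x := by
    intro x
    have := (hexp_deriv t 1 x).const_mul (theta 1)
    exact this.congr_deriv (by ring)
  have hfθ : ∀ s ≤ (1:ℝ), f s = theta s := fun s hs => if_pos hs
  have hf'θ : ∀ s ≤ (1:ℝ), f' s = theta' s := fun s hs => if_pos hs
  have hfg : ∀ s, (1:ℝ) ≤ s → f s = theta 1 * Real.exp (-t*(s-1)) := by
    intro s hs
    by_cases h : s ≤ 1
    · have hs1 : s = 1 := le_antisymm h hs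
      simp [hf_def, hs1]
    · exact if_neg h
  have hf'g : ∀ s, (1:ℝ) ≤ s → f' s = -(t * theta 1) * Real.exp (-t*(s-1)) := by
    intro s hs
    by_cases h : s ≤ 1
    · have hs1 : s = 1 := le_antisymm h hs
      simp [hf'_def, hs1, hbc']
    · exact if_neg h
  have hcover : Icc (0:ℝ) 1 ∪ Ici 1 = Ici 0 := by
    ext x
    simp only [mem_union, mem_Icc, mem_Ici]
    constructor
    · rintro (⟨h, _⟩ | h) <;> linarith
    · intro h
      rcases le_or_gt x 1 with h1 | h1
      · exact Or.inl ⟨h, h1⟩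
      · exact Or.inr h1.le
  -- derivative clause
  have hder : ∀ x ∈ Ici (0:ℝ), HasDerivWithinAt f (f' x) (Ici 0) x := by
    intro x hx
    rcases lt_trichotomy x 1 with hx1 | hx1 | hx1
    · have h2 : HasDerivWithinAt f (theta' x) (Icc 0 1) x :=
        (hθd x ⟨hx, hx1.le⟩).congr (fun s hs => hfθ s hs.2) (hfθ x hx1.le)
      rw [hf'θ x hx1.le]
      refine h2.mono_of_mem_nhdsWithin ?_
      rw [← Ici_inter_Iic]
      exact inter_mem_nhdsWithin _ (Iic_mem_nhds hx1)
    · subst hx1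
      have hL : HasDerivWithinAt f (theta' 1) (Icc 0 1) 1 :=
        (hθd 1 ⟨zero_le_one, le_rfl⟩).congr (fun s hs => hfθ s hs.2) (hfθ 1 le_rfl)
      have hR : HasDerivWithinAt f (theta' 1) (Ici 1) 1 := by
        have := (hg 1).hasDerivWithinAt (s := Ici 1)
        refine (this.congr (fun s hs => hfg s (mem_Ici.mp hs)) (hfg 1 le_rfl)).congr_deriv ?_
        rw [hbc']; simp
      rw [hf'θ 1 le_rfl, ← hcover]
      exact hL.union hR
    · have hev : f =ᶠ[nhds x] (fun s => theta 1 * Real.exp (-t*(s-1))) := by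
        filter_upwards [isOpen_Ioi.mem_nhds (show x ∈ Ioi (1:ℝ) from hx1)] with s hs
        exact hfg s (le_of_lt hs)
      have := (hg x).congr_of_eventuallyEq hev
      rw [hf'g x hx1.le]
      exact this.hasDerivWithinAt
  have hfc : ContinuousOn f (Ici 0) := fun x hx => (hder x hx).continuousWithinAt
  have hf'c : ContinuousOn f' (Ici 0) := by
    intro x hx
    rcases lt_trichotomy x 1 with hx1 | hx1 | hx1
    · have h2 : ContinuousWithinAt f' (Icc 0 1) x :=
        (hθ'c x ⟨hx, hx1.le⟩).congr (fun s hs => hf'θ s hs.2) (hf'θ x hx1.le)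
      refine h2.mono_of_mem_nhdsWithin ?_
      rw [← Ici_inter_Iic]
      exact inter_mem_nhdsWithin _ (Iic_mem_nhds hx1)
    · subst hx1
      have hL : ContinuousWithinAt f' (Icc 0 1) 1 :=
        (hθ'c 1 ⟨zero_le_one, le_rfl⟩).congr (fun s hs => hf'θ s hs.2) (hf'θ 1 le_rfl)
      have hR : ContinuousWithinAt f' (Ici 1) 1 := by
        have hc : Continuous (fun s => -(t * theta 1) * Real.exp (-t*(s-1))) :=
          continuous_const.mul (Real.continuous_exp.comp
            (continuous_const.mul (continuous_id.sub continuous_const)))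
        exact (hc.continuousWithinAt).congr (fun s hs => hf'g s (mem_Ici.mp hs)) (hf'g 1 le_rfl)
      rw [← hcover]
      exact hL.union hR
    · have hc : Continuous (fun s => -(t * theta 1) * Real.exp (-t*(s-1))) :=
        continuous_const.mul (Real.continuous_exp.comp
          (continuous_const.mul (continuous_id.sub continuous_const)))
      have hev : (fun s => -(t * theta 1) * Real.exp (-t*(s-1))) =ᶠ[nhds x] f' := by
        filter_upwards [isOpen_Ioi.mem_nhds (show x ∈ Ioi (1:ℝ) from hx1)] with s hs
        exact (hf'g s (le_of_lt hs)).symm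
      exact (hc.continuousAt.congr hev).continuousWithinAt
  -- integrability of the integrand
  have hGIf : ∀ z : ℝ, 0 ≤ z →
      IntervalIntegrable (fun s => (q s - (-t^2)) * f s) volume 0 z := by
    intro z hz
    refine ((hq.intervalIntegrable).sub intervalIntegrable_const).mul_continuousOn
      (hfc.mono ?_)
    rw [uIcc_of_le hz]
    exact fun s hs => hs.1
  -- the integral identity based at 0
  have P0 : ∀ x ∈ Ici (0:ℝ), f' x = f' 0 + ∫ s in (0:ℝ)..x, (q s - (-t^2)) * f s := by
    have base : ∀ x : ℝ, 0 ≤ x → x ≤ 1 →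
        f' x = f' 0 + ∫ s in (0:ℝ)..x, (q s - (-t^2)) * f s := by
      intro x hx0 hx1
      have h1 : (∫ s in (0:ℝ)..x, (q s - (-t^2)) * f s)
          = ∫ s in (0:ℝ)..x, (q s - (-t^2)) * theta s := by
        apply integral_congr
        intro s hs
        rw [uIcc_of_le hx0] at hs
        simp only []
        rw [hfθ s (hs.2.trans hx1)]
      rw [h1, hf'θ x hx1, hf'θ 0 zero_le_one]
      exact hθint 0 ⟨le_rfl, zero_le_one⟩ x ⟨hx0, hx1⟩
    intro x hx
    rcases le_or_gt x 1 with hx1 | hx1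
    · exact base x hx hx1
    · have h01 : IntervalIntegrable (fun s => (q s - (-t^2)) * f s) volume 0 1 :=
        (hGIf x (by linarith)).mono_set
          (by rw [uIcc_of_le (zero_le_one), uIcc_of_le (by linarith : (0:ℝ) ≤ x)]
              exact Icc_subset_Icc le_rfl hx1.le)
      have h1x : IntervalIntegrable (fun s => (q s - (-t^2)) * f s) volume 1 x :=
        (hGIf x (by linarith)).mono_set
          (by rw [uIcc_of_le hx1.le, uIcc_of_le (by linarith : (0:ℝ) ≤ x)]
              exact Icc_subset_Icc zero_le_one le_rfl)
      have hsplit : (∫ s in (0:ℝ)..1, (q s - (-t^2)) * f s) + (∫ s in (1:ℝ)..x, (q s - (-t^2)) * f s)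
          = ∫ s in (0:ℝ)..x, (q s - (-t^2)) * f s :=
        integral_add_adjacent_intervals h01 h1x
      have hbase1 := base 1 zero_le_one le_rfl
      have htail : (∫ s in (1:ℝ)..x, (q s - (-t^2)) * f s)
          = (t^2 * theta 1) * ∫ s in (1:ℝ)..x, Real.exp (-t*(s-1)) := by
        rw [← intervalIntegral.integral_const_mul]
        apply intervalIntegral.integral_congr_ae
        apply ae_of_all
        intro s hs
        rw [Set.uIoc_of_le hx1.le] at hs
        have hs1 : 1 < s := hs.1
        have hqs : q s = 0 := hq0 s (by simp only [mem_Icc, not_and_or, not_le]; right; exact hs1)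
        have hfs : f s = theta 1 * Real.exp (-t*(s-1)) := if_neg (not_le.2 hs1)
        rw [hqs, hfs]; ring
      have hint_exp : (∫ s in (1:ℝ)..x, Real.exp (-t*(s-1)))
          = (-(1/t) * Real.exp (-t*(x-1))) - (-(1/t) * Real.exp (-t*(1-1))) := by
        apply integral_eq_sub_of_hasDerivAt
        · intro s _
          have := (hexp_deriv t 1 s).const_mul (-(1/t))
          exact this.congr_deriv (by field_simp)
        · apply ContinuousOn.intervalIntegrable
          exact (Real.continuous_exp.comp
            (continuous_const.mul (continuous_id.sub continuous_const))).continuousOn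
      have hfx : f' x = -(t * theta 1) * Real.exp (-t*(x-1)) := if_neg (not_le.2 hx1)
      have hf0 : f' 0 = theta' 0 := hf'θ 0 zero_le_one
      have hf1 : f' 1 = theta' 1 := hf'θ 1 le_rfl
      rw [← hsplit, htail, hint_exp, hfx, hf0]
      rw [hf0, hf1] at hbase1
      have hfe : Real.exp (-t*(1-1)) = 1 := by norm_num
      rw [hfe] at *
      have ht' : t ≠ 0 := ne_of_gt ht
      have : (∫ s in (0:ℝ)..1, (q s - (-t^2)) * f s) = theta' 1 - theta' 0 := by linarith
      rw [this, hbc', htheta'0]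
      field_simp
      ring
  refine ⟨f, f', ⟨hfc, hf'c, hder, ?_⟩, ?_, ⟨0, mem_Ici.mpr le_rfl, ?_⟩, ?_⟩
  · intro a ha x hx
    have h1 := P0 a ha
    have h2 := P0 x hx
    have h3 : (∫ s in (0:ℝ)..x, (q s - (-t^2)) * f s) - (∫ s in (0:ℝ)..a, (q s - (-t^2)) * f s)
        = ∫ s in a..x, (q s - (-t^2)) * f s :=
      integral_interval_sub_left (hGIf x hx) (hGIf a ha)
    linarith
  · rw [hf'θ 0 zero_le_one]; exact htheta'0
  · rw [hfθ 0 zero_le_one, htheta0]; norm_num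
  · rw [← Ioc_union_Ioi_eq_Ioi (zero_le_one)]
    apply IntegrableOn.union
    · have h1 : IntegrableOn (fun x => theta x ^ 2) (Icc 0 1) volume :=
        ((hθc.mono (by norm_num : Icc (0:ℝ) 1 ⊆ Icc 0 1)).pow 2).integrableOn_Icc
      refine (h1.mono_set Ioc_subset_Icc_self).congr_fun ?_ measurableSet_Ioc
      intro s hs
      simp only []
      rw [hfθ s hs.2]
    · have h1 : IntegrableOn (fun x => (theta 1 ^ 2 * Real.exp (2*t)) * Real.exp (-(2*t)*x))
          (Ioi 1) volume :=
        (exp_neg_integrableOn_Ioi 1 (by linarith : (0:ℝ) < 2*t)).const_mul _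
      refine h1.congr_fun ?_ measurableSet_Ioi
      intro s hs
      have hs1 : 1 < s := hs
      have hfs : f s = theta 1 * Real.exp (-t*(s-1)) := if_neg (not_le.2 hs1)
      simp only []
      have h2 : Real.exp (-t*(s-1)) ^ 2 = Real.exp ((2:ℝ)*t) * Real.exp (-(2*t)*s) := by
        rw [sq, ← Real.exp_add, ← Real.exp_add]
        congr 1; ring
      rw [hfs, mul_pow, h2]; ring

lemma fwd (q : ℝ → ℝ) (hq : Integrable q)
    (hq0 : ∀ x : ℝ, x ∉ Icc (0:ℝ) 1 → q x = 0) (t : ℝ) (ht : 0 < t)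
    (theta theta' : ℝ → ℝ)
    (htheta : SolvesOn q (-t ^ 2) (Icc 0 1) theta theta')
    (htheta0 : theta 0 = 1) (htheta'0 : theta' 0 = 0)
    (hev : IsEvTN q (-t ^ 2)) : theta' 1 + t * theta 1 = 0 := by
  obtain ⟨f, f', ⟨hfc, hf'c, hfd, hfint⟩, hf'0, ⟨x₀, hx₀, hfx₀⟩, hL2⟩ := hev
  obtain ⟨hθc, hθ'c, hθd, hθint⟩ := htheta
  have hts : t ≠ 0 := ne_of_gt ht
  have hGint : ∀ a b : ℝ, IntervalIntegrable (fun s => q s - (-t^2)) volume a b :=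
    fun a b => (hq.intervalIntegrable).sub intervalIntegrable_const
  have hsub01 : Icc (0:ℝ) 1 ⊆ Ici 0 := fun s hs => hs.1
  -- Step C : on [0,1], f = f 0 • theta
  have stepC : ∀ x ∈ Icc (0:ℝ) 1, f x = f 0 * theta x ∧ f' x = f 0 * theta' x := by
    have key := ode_unique (fun s => q s - (-t^2)) (fun x => f x - f 0 * theta x)
      (fun x => f' x - f 0 * theta' x) zero_le_one (hGint 0 1)
      ((hfc.mono hsub01).sub (continuousOn_const.mul hθc))
      ((hf'c.mono hsub01).sub (continuousOn_const.mul hθ'c))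
      (fun x hx => ((hfd x (hsub01 hx)).mono hsub01).sub ((hθd x hx).const_mul (f 0)))
      ?_ (by rw [htheta0]; ring) (by rw [hf'0, htheta'0]; ring)
    · intro x hx
      have h := key x hx
      constructor <;> linarith [h.1, h.2]
    · intro c hc x hx
      have h1 := hfint c (hsub01 hc) x (hsub01 hx)
      have h2 := hθint c hc x hx
      have husub : uIcc c x ⊆ Icc (0:ℝ) 1 := by
        rw [← uIcc_of_le (zero_le_one : (0:ℝ) ≤ 1)]
        exact uIcc_subset_uIcc (by rw [uIcc_of_le zero_le_one]; exact hc)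
          (by rw [uIcc_of_le zero_le_one]; exact hx)
      have hIf : IntervalIntegrable (fun s => (q s - (-t^2)) * f s) volume c x :=
        (hGint c x).mul_continuousOn (hfc.mono (husub.trans hsub01))
      have hIθ : IntervalIntegrable (fun s => (q s - (-t^2)) * theta s) volume c x :=
        (hGint c x).mul_continuousOn (hθc.mono husub)
      have e1 : (∫ s in c..x, (q s - (-t^2)) * (f s - f 0 * theta s))
          = (∫ s in c..x, (q s - (-t^2)) * f s)
            - f 0 * ∫ s in c..x, (q s - (-t^2)) * theta s := by
        rw [← intervalIntegral.integral_const_mul, ← integral_sub hIf (hIθ.const_mul (f 0))]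
        apply integral_congr
        intro s _
        simp only []
        ring
      rw [e1]
      linear_combination h1 - f 0 * h2
  -- Step A : on [1,∞), f is a combination of exponentials
  set C1 : ℝ := (f 1 + f' 1 / t)/2 with hC1_def
  set C2 : ℝ := (f 1 - f' 1 / t)/2 with hC2_def
  set w : ℝ → ℝ := fun x => C1 * Real.exp (t*(x-1)) + C2 * Real.exp (-t*(x-1)) with hw_def
  set w' : ℝ → ℝ := fun x => t*C1 * Real.exp (t*(x-1)) - t*C2 * Real.exp (-t*(x-1)) with hw'_def
  have hep : ∀ x : ℝ, HasDerivAt (fun s => Real.exp (t*(s-1))) (t * Real.exp (t*(x-1))) x := by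
    intro x
    simpa [neg_neg] using hexp_deriv (-t) 1 x
  have hwd : ∀ x, HasDerivAt w (w' x) x := by
    intro x
    have h := ((hep x).const_mul C1).add ((hexp_deriv t 1 x).const_mul C2)
    rw [hw_def, hw'_def]
    exact h.congr_deriv (by ring)
  have hw'd : ∀ x, HasDerivAt w' (t^2 * w x) x := by
    intro x
    have h := ((hep x).const_mul (t*C1)).sub ((hexp_deriv t 1 x).const_mul (t*C2))
    rw [hw_def, hw'_def]
    exact h.congr_deriv (by ring)
  have hec : Continuous (fun s : ℝ => Real.exp (t*(s-1))) :=
    Real.continuous_exp.comp (continuous_const.mul (continuous_id.sub continuous_const))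
  have hec' : Continuous (fun s : ℝ => Real.exp (-t*(s-1))) :=
    Real.continuous_exp.comp (continuous_const.mul (continuous_id.sub continuous_const))
  have hwc : Continuous w := by
    rw [hw_def]
    exact (continuous_const.mul hec).add (continuous_const.mul hec')
  have hw'c : Continuous w' := by
    rw [hw'_def]
    exact (continuous_const.mul hec).sub (continuous_const.mul hec')
  have hw1 : w 1 = f 1 := by
    rw [hw_def]; simp only [sub_self, mul_zero, neg_zero, Real.exp_zero, mul_one,
      hC1_def, hC2_def]
    ring
  have hw'1 : w' 1 = f' 1 := by
    rw [hw'_def]; simp only [sub_self, mul_zero, neg_zero, Real.exp_zero, mul_one,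
      hC1_def, hC2_def]
    field_simp
    ring
  have hwint : ∀ c x : ℝ, 1 ≤ c → 1 ≤ x →
      w' x = w' c + ∫ s in c..x, (q s - (-t^2)) * w s := by
    intro c x hc hx
    have h1 : (∫ s in c..x, t^2 * w s) = w' x - w' c :=
      integral_eq_sub_of_hasDerivAt (fun s _ => hw'd s)
        ((continuous_const.mul hwc).continuousOn.intervalIntegrable)
    have h2 : (∫ s in c..x, (q s - (-t^2)) * w s) = ∫ s in c..x, t^2 * w s := by
      apply intervalIntegral.integral_congr_ae
      apply ae_of_all
      intro s hs
      have hs1 : 1 < s := lt_of_le_of_lt (le_min hc hx) hs.1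
      rw [hq0 s (by simp only [mem_Icc, not_and_or, not_le]; right; exact hs1)]
      ring
    rw [h2]
    linarith
  have stepA : ∀ x, 1 ≤ x → f x = w x ∧ f' x = w' x := by
    intro R hR
    have hsub1R : Icc (1:ℝ) R ⊆ Ici 0 := fun s hs => le_trans zero_le_one hs.1
    have key := ode_unique (fun s => q s - (-t^2)) (fun x => f x - w x)
      (fun x => f' x - w' x) hR (hGint 1 R)
      ((hfc.mono hsub1R).sub hwc.continuousOn)
      ((hf'c.mono hsub1R).sub hw'c.continuousOn)
      (fun x hx => ((hfd x (hsub1R hx)).mono hsub1R).sub (hwd x).hasDerivWithinAt)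
      ?_ (by rw [hw1]; ring) (by rw [hw'1]; ring)
    · have h := key R ⟨hR, le_rfl⟩
      constructor <;> linarith [h.1, h.2]
    · intro c hc x hx
      have h1 := hfint c (hsub1R hc) x (hsub1R hx)
      have h2 := hwint c x hc.1 hx.1
      have husub : uIcc c x ⊆ Icc (1:ℝ) R := by
        rw [← uIcc_of_le hR]
        exact uIcc_subset_uIcc (by rw [uIcc_of_le hR]; exact hc)
          (by rw [uIcc_of_le hR]; exact hx)
      have hIf : IntervalIntegrable (fun s => (q s - (-t^2)) * f s) volume c x :=
        (hGint c x).mul_continuousOn (hfc.mono (husub.trans hsub1R))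
      have hIw : IntervalIntegrable (fun s => (q s - (-t^2)) * w s) volume c x :=
        (hGint c x).mul_continuousOn hwc.continuousOn
      have e1 : (∫ s in c..x, (q s - (-t^2)) * (f s - w s))
          = (∫ s in c..x, (q s - (-t^2)) * f s)
            - ∫ s in c..x, (q s - (-t^2)) * w s := by
        rw [← integral_sub hIf hIw]
        apply integral_congr
        intro s _
        simp only []
        ring
      rw [e1]
      linear_combination h1 - h2
  -- Step B : C1 = 0, from square integrability
  have hC1 : C1 = 0 := by
    by_contra hC
    have hCpos : 0 < |C1| := abs_pos.mpr hC
    have hgrow : Tendsto (fun x => |C1| * Real.exp (t*(x-1))) atTop atTop := by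
      apply Tendsto.const_mul_atTop hCpos
      apply Real.tendsto_exp_atTop.comp
      have h1 : Tendsto (fun x : ℝ => t*x + (-t)) atTop atTop :=
        tendsto_atTop_add_const_right atTop (-t) (Tendsto.const_mul_atTop ht tendsto_id)
      have h2 : (fun x : ℝ => t*(x-1)) = fun x : ℝ => t*x + (-t) := by
        funext x; ring
      rw [h2]
      exact h1
    have hev1 : ∀ᶠ x in atTop, |C2| + 1 ≤ |C1| * Real.exp (t*(x-1)) :=
      hgrow.eventually_ge_atTop _
    obtain ⟨R, hRprop⟩ := eventually_atTop.mp (hev1.and (eventually_ge_atTop 1))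
    have hR1 : 1 ≤ R := (hRprop R le_rfl).2
    have hfbig : ∀ x, x ∈ Ioi R → 1 ≤ (f x)^2 := by
      intro x hx
      obtain ⟨hbig, hx1⟩ := hRprop x (le_of_lt hx)
      have hfx := (stepA x hx1).1
      have hexple : Real.exp (-t*(x-1)) ≤ 1 := by
        rw [Real.exp_le_one_iff]
        nlinarith
      have hlow : |C1 * Real.exp (t*(x-1))| - |C2 * Real.exp (-t*(x-1))|
          ≤ |C1 * Real.exp (t*(x-1)) + C2 * Real.exp (-t*(x-1))| := by
        have := abs_sub_abs_le_abs_sub (C1 * Real.exp (t*(x-1))) (-(C2 * Real.exp (-t*(x-1))))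
        simpa [sub_neg_eq_add] using this
      have he1 : |C1 * Real.exp (t*(x-1))| = |C1| * Real.exp (t*(x-1)) := by
        rw [abs_mul, abs_of_pos (Real.exp_pos _)]
      have he2 : |C2 * Real.exp (-t*(x-1))| = |C2| * Real.exp (-t*(x-1)) := by
        rw [abs_mul, abs_of_pos (Real.exp_pos _)]
      have hC2b : |C2| * Real.exp (-t*(x-1)) ≤ |C2| :=
        mul_le_of_le_one_right (abs_nonneg _) hexple
      have h1le : 1 ≤ |f x| := by
        rw [hfx, hw_def]
        simp only []
        rw [he1, he2] at hlow
        linarith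
      nlinarith [sq_abs (f x)]
    have hL2R : IntegrableOn (fun x => (f x)^2) (Ioi R) volume :=
      hL2.mono_set (Ioi_subset_Ioi (by linarith))
    have hone : Integrable (fun _ => (1:ℝ)) (volume.restrict (Ioi R)) := by
      apply hL2R.mono' aestronglyMeasurable_const
      rw [ae_restrict_iff' measurableSet_Ioi]
      apply ae_of_all
      intro x hx
      rw [norm_one]
      exact hfbig x hx
    have := integrable_const_iff.mp hone
    have := (this.resolve_left one_ne_zero).measure_univ_lt_top
    simp [Measure.restrict_apply_univ, Real.volume_Ioi] at this
  -- Step D : f 0 ≠ 0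
  have hf0 : f 0 ≠ 0 := by
    intro h0
    have hz01 : ∀ x ∈ Icc (0:ℝ) 1, f x = 0 := by
      intro x hx
      rw [(stepC x hx).1, h0, zero_mul]
    have hf1 : f 1 = 0 := hz01 1 ⟨zero_le_one, le_rfl⟩
    have hf'1 : f' 1 = 0 := by
      have := (stepC 1 ⟨zero_le_one, le_rfl⟩).2
      rw [this, h0, zero_mul]
    have hC2z : C2 = 0 := by rw [hC2_def, hf1, hf'1]; simp
    have hzIci : ∀ x, 1 ≤ x → f x = 0 := by
      intro x hx
      rw [(stepA x hx).1, hw_def]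
      simp only [hC1, hC2z]
      ring
    rcases le_or_gt x₀ 1 with h | h
    · exact hfx₀ (hz01 x₀ ⟨hx₀, h⟩)
    · exact hfx₀ (hzIci x₀ h.le)
  -- conclusion
  have hfin1 := (stepC 1 ⟨zero_le_one, le_rfl⟩).1
  have hfin2 := (stepC 1 ⟨zero_le_one, le_rfl⟩).2
  have hC1' : f 1 + f' 1 / t = 0 := by
    rw [hC1_def] at hC1
    linarith
  rw [hfin1, hfin2] at hC1'
  field_simp at hC1'
  have h3 : f 0 * (theta' 1 + t * theta 1) = 0 := by linear_combination hC1'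
  rcases mul_eq_zero.mp h3 with h | h
  · exact absurd h hf0
  · exact h

end AuxiliaryLemmas

/-- `-t²` is an eigenvalue of the half-line Neumann operator `T̃` iff
`θ'(1,-t²) + t θ(1,-t²) = 0`. -/
theorem neumann_eigenvalue_iff (q : ℝ → ℝ) (hq : Integrable q)
    (hq0 : ∀ x : ℝ, x ∉ Icc (0:ℝ) 1 → q x = 0) (t : ℝ) (ht : 0 < t)
    (theta theta' : ℝ → ℝ)
    (htheta : SolvesOn q (-t ^ 2) (Icc 0 1) theta theta')
    (htheta0 : theta 0 = 1) (htheta'0 : theta' 0 = 0) :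
    IsEvTN q (-t ^ 2) ↔ theta' 1 + t * theta 1 = 0 :=
  ⟨fun h => fwd q hq hq0 t ht theta theta' htheta htheta0 htheta'0 h,
   fun h => bwd q hq hq0 t ht theta theta' htheta htheta0 htheta'0 h⟩
end
end
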